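/- (Theorem 4, quantitative form) Let (A, B, u_O, u_L) be a finite two-player bimatrix game in which the learner has exactly two actions (|B| = 2), with Stackelberg value V. For every ε > 0 there exists δ > 0 such that for every horizon T ≥ 1 and all sequences a^1, …, a^T ∈ A and b^1, …, b^T ∈ B: if the external regret max_{b ∈ B} Σ_{t=1}^T u_L(a^t, b) − Σ_{t=1}^T u_L(a^t, b^t) is at most δ·T, then the optimizer's total utility satisfies Σ_{t=1}^T u_O(a^t, b^t) ≤ (V + ε)·T. -/

import Mathlib

open Finset

/-- A probability distribution (mixed strategy) on a finite type. -/
def IsDist {X : Type*} [Fintype X] (f : X → ℝ) : Prop :=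
  (∀ x, 0 ≤ f x) ∧ ∑ x, f x = 1

/-- The set of optimizer utilities `u_O(α, b)` over pairs where `b` is a best
response to `α`; the Stackelberg value is its greatest element. -/
def StackSet {A B : Type*} [Fintype A] [Fintype B] (uO uL : A → B → ℝ) : Set ℝ :=
  {v | ∃ (α : A → ℝ) (b : B), IsDist α ∧
    (∀ b' : B, ∑ a, α a * uL a b' ≤ ∑ a, α a * uL a b) ∧
    v = ∑ a, α a * uO a b}

/-!
By compactness of the simplex there is `γ > 0` such that whenever `b` is a `γ`-approximate best
response to `α`, the optimizer gets at most `V + ε / 2` from `(α, b)`. Split the rounds according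
to the learner's action `c`. With only two actions, always playing `b'` differs from the actual
play only on the fiber of the other action, so the external regret bounds the regret of each fiber
against each deviation. A fiber with more than `δT / γ` rounds thus has an empirical distribution
of optimizer actions to which `c` is a `γ`-approximate best response, while the lighter fibers
contribute `O(δT / γ)` in total.
-/

lemma le_add_of_forall_sum_sub_sum_diag_le {B : Type*} [Fintype B] (hB : Fintype.card B = 2)
    {f : B → B → ℝ} {R : ℝ} (hR0 : 0 ≤ R) (hR : ∀ b', ∑ y, f y b' - ∑ y, f y y ≤ R)
    (c b' : B) : f c b' ≤ f c c + R := by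
  classical
  rcases eq_or_ne c b' with rfl | hne
  · linarith
  have huniv : univ = {c, b'} := (eq_univ_of_card _ (by rw [card_pair hne, hB])).symm
  have := hR b'
  rw [huniv, sum_pair hne, sum_pair hne] at this
  linarith

section JointCount

variable {ι A B : Type*} [Fintype ι]

open scoped Classical in
noncomputable def jointCount (a : ι → A) (b : ι → B) (x : A) (y : B) : ℝ :=
  #{t | a t = x ∧ b t = y}

variable [Fintype A] [Fintype B]

lemma sum_eq_sum_jointCount_mul (a : ι → A) (b : ι → B) (f : A → B → ℝ) :
    ∑ t, f (a t) (b t) = ∑ y, ∑ x, jointCount a b x y * f x y := by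
  classical
  rw [← Finset.sum_fiberwise' univ (fun t => (a t, b t)) (fun p => f p.1 p.2),
    Fintype.sum_prod_type, Finset.sum_comm]
  refine sum_congr rfl fun y _ => sum_congr rfl fun x _ => ?_
  simp only [sum_const, nsmul_eq_mul, jointCount, Prod.mk.injEq]

lemma sum_sum_jointCount (a : ι → A) (b : ι → B) :
    ∑ y, ∑ x, jointCount a b x y = Fintype.card ι := by
  simpa using (sum_eq_sum_jointCount_mul a b fun _ _ => 1).symm

lemma sum_jointCount_mul_le_of_regret_le (hB : Fintype.card B = 2) {u : A → B → ℝ}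
    {a : ι → A} {b : ι → B} {R : ℝ} (hR0 : 0 ≤ R)
    (hR : ∀ b', ∑ t, u (a t) b' - ∑ t, u (a t) (b t) ≤ R) (c b' : B) :
    ∑ x, jointCount a b x c * u x b' ≤ ∑ x, jointCount a b x c * u x c + R := by
  refine le_add_of_forall_sum_sub_sum_diag_le (f := fun y b' => ∑ x, jointCount a b x y * u x b')
    hB hR0 (fun b' => ?_) c b'
  rw [← sum_eq_sum_jointCount_mul a b fun x _ => u x b', ← sum_eq_sum_jointCount_mul a b u]
  exact hR b'

end JointCount

section ApproxBestResponse

variable {A B : Type*} [Fintype A] {uO uL : A → B → ℝ} {V : ℝ}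

lemma eventually_forall_approx_best_response_le [Fintype B] (hV : IsGreatest (StackSet uO uL) V)
    {ε : ℝ} (hε : 0 < ε) (b : B) :
    ∀ᶠ γ in nhdsWithin (0 : ℝ) (Set.Ioi 0), ∀ α, IsDist α →
      (∀ b', ∑ x, α x * uL x b' ≤ ∑ x, α x * uL x b + γ) → ∑ x, α x * uO x b ≤ V + ε := by
  set S := stdSimplex ℝ A ∩ {α | V + ε ≤ ∑ x, α x * uO x b}
  set regret : (A → ℝ) → ℝ := fun α =>
    univ.sup' ⟨b, mem_univ b⟩ fun b' => ∑ x, α x * uL x b' - ∑ x, α x * uL x b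
  have hS : IsCompact S :=
    (isCompact_stdSimplex ℝ A).inter_right (isClosed_le continuous_const (by fun_prop))
  rcases S.eq_empty_or_nonempty with hS0 | hSne
  · refine Filter.Eventually.of_forall fun γ α hα _ => ?_
    by_contra! h
    exact (Set.eq_empty_iff_forall_notMem.1 hS0) α ⟨hα, h.le⟩
  have hcont : Continuous regret := Continuous.finset_sup'_apply _ fun b' _ => by fun_prop
  obtain ⟨α₀, hα₀, hmin⟩ := hS.exists_isMinOn hSne hcont.continuousOn
  -- `regret α₀ ≤ 0` would make `b` an exact best response to `α₀`, worth more than `V`.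
  have hpos : 0 < regret α₀ := by
    by_contra! h
    have hbr : ∀ b', ∑ x, α₀ x * uL x b' ≤ ∑ x, α₀ x * uL x b := fun b' =>
      sub_nonpos.1 ((le_sup' _ (mem_univ b')).trans h)
    have hα₀V : V + ε ≤ ∑ x, α₀ x * uO x b := hα₀.2
    linarith [hV.2 ⟨α₀, b, hα₀.1, hbr, rfl⟩]
  filter_upwards [Ioo_mem_nhdsGT hpos] with γ hγ α hα hbr
  by_contra! h
  have : regret α₀ ≤ regret α := hmin ⟨hα, h.le⟩
  have : regret α ≤ γ := sup'_le _ _ fun b' _ => by linarith [hbr b']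
  linarith [hγ.2]

lemma sum_mul_le_of_approx_best_response {ε γ K R : ℝ} {c : B} (hε : 0 ≤ ε) (hγ : 0 < γ)
    (hγV : ∀ α, IsDist α →
      (∀ b', ∑ x, α x * uL x b' ≤ ∑ x, α x * uL x c + γ) → ∑ x, α x * uO x c ≤ V + ε)
    (hK0 : 0 ≤ K) (hK : ∀ x, uO x c ≤ V + K) {w : A → ℝ} (hw : ∀ x, 0 ≤ w x)
    (hR : ∀ b', ∑ x, w x * uL x b' ≤ ∑ x, w x * uL x c + R) :
    ∑ x, w x * uO x c ≤ (∑ x, w x) * (V + ε) + R / γ * K := by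
  set m := ∑ x, w x
  have hR0 : 0 ≤ R := by simpa using hR c
  have hRK : 0 ≤ R / γ * K := by positivity
  rcases le_or_gt m (R / γ) with hlight | hheavy
  · have hm : 0 ≤ m := sum_nonneg fun x _ => hw x
    calc ∑ x, w x * uO x c ≤ ∑ x, w x * (V + K) :=
          sum_le_sum fun x _ => mul_le_mul_of_nonneg_left (hK x) (hw x)
      _ = m * V + m * K := by rw [← sum_mul]; ring
      _ ≤ m * (V + ε) + R / γ * K := by
          nlinarith [mul_le_mul_of_nonneg_right hlight hK0, mul_nonneg hm hε]
  · have hm : 0 < m := (div_nonneg hR0 hγ.le).trans_lt hheavy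
    have hnorm (g : A → ℝ) : ∑ x, w x / m * g x = (∑ x, w x * g x) / m := by
      rw [sum_div]
      exact sum_congr rfl fun x _ => div_mul_eq_mul_div _ _ _
    have hdist : IsDist fun x => w x / m :=
      ⟨fun x => div_nonneg (hw x) hm.le, by rw [← sum_div, div_self hm.ne']⟩
    have hRm : R / m ≤ γ := by
      rw [div_lt_iff₀ hγ] at hheavy
      rw [div_le_iff₀ hm]
      linarith
    have hbr (b' : B) : ∑ x, w x / m * uL x b' ≤ ∑ x, w x / m * uL x c + γ := by
      rw [hnorm, hnorm]
      calc (∑ x, w x * uL x b') / m ≤ (∑ x, w x * uL x c + R) / m :=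
            div_le_div_of_nonneg_right (hR b') hm.le
        _ = (∑ x, w x * uL x c) / m + R / m := add_div _ _ _
        _ ≤ _ := by linarith
    have := hγV _ hdist hbr
    rw [hnorm, div_le_iff₀ hm] at this
    linarith

end ApproxBestResponse

theorem stmt9_general {A B : Type*} [Fintype A] [Fintype B] [Nonempty B]
    (hB : Fintype.card B = 2)
    (uO uL : A → B → ℝ)
    (V : ℝ) (hV : IsGreatest (StackSet uO uL) V) :
    ∀ ε : ℝ, 0 < ε → ∃ δ : ℝ, 0 < δ ∧
      ∀ (T : ℕ), 1 ≤ T → ∀ (a : Fin T → A) (b : Fin T → B),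
        ((univ.sup' univ_nonempty fun b' : B => ∑ t : Fin T, uL (a t) b')
            - ∑ t : Fin T, uL (a t) (b t) ≤ δ * T) →
        ∑ t : Fin T, uO (a t) (b t) ≤ (V + ε) * T := by
  intro ε hε
  obtain ⟨γ, hγV, hγ⟩ := ((Filter.eventually_all.2 fun b =>
    eventually_forall_approx_best_response_le hV (half_pos hε) b).and self_mem_nhdsWithin).exists
  obtain ⟨M, hM⟩ := Finite.exists_le fun p : A × B => uO p.1 p.2
  set K := max (M - V) 0
  have hK (x : A) (y : B) : uO x y ≤ V + K := by linarith [hM (x, y), le_max_left (M - V) 0]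
  refine ⟨ε * γ / (4 * (K + 1)), by positivity, fun T _ a b hreg => ?_⟩
  set δ := ε * γ / (4 * (K + 1))
  set N := jointCount a b
  have hregret (b' : B) : ∑ t, uL (a t) b' - ∑ t, uL (a t) (b t) ≤ δ * T :=
    (sub_le_sub_right (le_sup' _ (mem_univ b')) _).trans hreg
  have hfiber (c : B) :
      ∑ x, N x c * uO x c ≤ (∑ x, N x c) * (V + ε / 2) + δ * T / γ * K :=
    sum_mul_le_of_approx_best_response (half_pos hε).le hγ (hγV c) (le_max_right _ _)
      (fun x => hK x c) (fun x => Nat.cast_nonneg _)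
      (sum_jointCount_mul_le_of_regret_le hB (by positivity) hregret c)
  have hδγ : δ * T / γ * K ≤ ε / 4 * T := by
    rw [show δ * T / γ * K = ε / 4 * T * (K / (K + 1)) by simp only [δ]; field_simp]
    exact mul_le_of_le_one_right (by positivity) ((div_le_one (by positivity)).2 (by linarith))
  calc ∑ t, uO (a t) (b t) = ∑ c, ∑ x, N x c * uO x c := sum_eq_sum_jointCount_mul a b uO
    _ ≤ ∑ c, ((∑ x, N x c) * (V + ε / 2) + δ * T / γ * K) := sum_le_sum fun c _ => hfiber c
    _ = T * (V + ε / 2) + 2 * (δ * T / γ * K) := by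
        rw [sum_add_distrib, ← sum_mul, sum_sum_jointCount, sum_const, card_univ, hB,
          Fintype.card_fin]
        ring
    _ ≤ (V + ε) * T := by linarith

/-- Theorem 4 (quantitative form): when the learner has exactly two actions,
for every `ε > 0` there is `δ > 0` such that whenever the learner's external
regret is at most `δ·T`, the optimizer's total utility is at most `(V + ε)·T`,
where `V` is the Stackelberg value. -/
theorem stmt9 {A B : Type*} [Fintype A] [Fintype B] [Nonempty A] [Nonempty B]
    (hB : Fintype.card B = 2)
    (uO uL : A → B → ℝ)
    (V : ℝ) (hV : IsGreatest (StackSet uO uL) V) :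
    ∀ ε : ℝ, 0 < ε → ∃ δ : ℝ, 0 < δ ∧
      ∀ (T : ℕ), 1 ≤ T → ∀ (a : Fin T → A) (b : Fin T → B),
        ((univ.sup' univ_nonempty fun b' : B => ∑ t : Fin T, uL (a t) b')
            - ∑ t : Fin T, uL (a t) (b t) ≤ δ * T) →
        ∑ t : Fin T, uO (a t) (b t) ≤ (V + ε) * T :=
  stmt9_general hB uO uL V hV
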